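/- The kernel g₃(P₂) of the prolonged symbol of the extended Rapcsák operator has dimension (4n³ + 3n² − n)/6; precisely, the subspace of symmetric trilinear forms A : V × V × V → ℝ satisfying A(X, Y, C) = 0 for all X, Y ∈ V and A(X, P_h Y, J Z) = A(X, P_h Z, J Y) for all X, Y, Z ∈ V has dimension (4n³ + 3n² − n)/6. -/

import Mathlib

/-!
Write a trilinear form in the basis `h_i = (e_i, 0)`, `v_i = (0, e_i)`. Symmetry together with
`A(X, P_h Y, J Z) = A(X, P_h Z, J Y)` lets one exchange the indices of any two basis arguments
while keeping their kinds (horizontal or vertical), so an entry of `A` only depends on the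
multiset of kinds and the multiset of indices of its arguments, its *shape*. The condition
`A(X, Y, C) = 0` kills exactly the shapes with a vertical argument and the index `n`, and every
other shape can be prescribed freely. There are `4 · C(n+2, 3)` shapes, `3 · C(n+1, 2)` of
them are killed, and `4 · C(n+2, 3) - 3 · C(n+1, 2) = (4n³ + 3n² - n)/6`.
-/

set_option synthInstance.maxHeartbeats 1000000
set_option maxHeartbeats 1000000

noncomputable section

/-- The pointwise model `V = (Fin n → ℝ) × (Fin n → ℝ)` of the double tangent space
`T_x(TM)` for a spray on an `n`-dimensional manifold, in an adapted basis. -/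
abbrev V (n : ℕ) : Type := (Fin n → ℝ) × (Fin n → ℝ)

/-- The vertical endomorphism `J (x, y) = (0, x)`. -/
def Jmap (n : ℕ) : V n →ₗ[ℝ] V n where
  toFun p := (0, p.1)
  map_add' a b := by simp
  map_smul' c a := by simp

/-- The horizontal projector `P_h (x, y) = (x, 0)`. -/
def Ph (n : ℕ) : V n →ₗ[ℝ] V n where
  toFun p := (p.1, 0)
  map_add' a b := by simp
  map_smul' c a := by simp

/-- The `j`-th standard basis vector of `Fin n → ℝ`, indexed by `1 ≤ j ≤ n`
(zero if `j` is out of range). -/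
def dlt (n j : ℕ) : Fin n → ℝ := fun i => if (i : ℕ) + 1 = j then 1 else 0

/-- The horizontal basis vector `h_j`, `1 ≤ j ≤ n`. -/
def hvec (n j : ℕ) : V n := (dlt n j, 0)

/-- The vertical basis vector `v_j`, `1 ≤ j ≤ n`. -/
def vvec (n j : ℕ) : V n := (0, dlt n j)

/-- The spray vector `S = h_n`. -/
def Svec (n : ℕ) : V n := hvec n n

/-- The Liouville vector `C = v_n = J S`. -/
def Cvec (n : ℕ) : V n := vvec n n

/-- Bilinear forms on `V n`. -/
abbrev Bil (n : ℕ) := V n →ₗ[ℝ] V n →ₗ[ℝ] ℝ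

/-- Trilinear forms on `V n` (bundled). -/
abbrev Tri (n : ℕ) := V n →ₗ[ℝ] V n →ₗ[ℝ] V n →ₗ[ℝ] ℝ

/-- Trilinearity of a function `A : V × V × V → ℝ`. -/
def IsTrilin (n : ℕ) (A : V n → V n → V n → ℝ) : Prop :=
  (∀ X X' Y Z, A (X + X') Y Z = A X Y Z + A X' Y Z) ∧
  (∀ (c : ℝ) X Y Z, A (c • X) Y Z = c * A X Y Z) ∧
  (∀ X Y Y' Z, A X (Y + Y') Z = A X Y Z + A X Y' Z) ∧
  (∀ (c : ℝ) X Y Z, A X (c • Y) Z = c * A X Y Z) ∧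
  (∀ X Y Z Z', A X Y (Z + Z') = A X Y Z + A X Y Z') ∧
  (∀ (c : ℝ) X Y Z, A X Y (c • Z) = c * A X Y Z)

theorem IsTrilin.add {n : ℕ} {a b : V n → V n → V n → ℝ}
    (ha : IsTrilin n a) (hb : IsTrilin n b) : IsTrilin n (a + b) := by
  obtain ⟨ha1, ha2, ha3, ha4, ha5, ha6⟩ := ha
  obtain ⟨hb1, hb2, hb3, hb4, hb5, hb6⟩ := hb
  refine ⟨fun X X' Y Z => ?_, fun c X Y Z => ?_, fun X Y Y' Z => ?_,
    fun c X Y Z => ?_, fun X Y Z Z' => ?_, fun c X Y Z => ?_⟩ <;>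
      simp only [Pi.add_apply]
  · linear_combination ha1 X X' Y Z + hb1 X X' Y Z
  · linear_combination ha2 c X Y Z + hb2 c X Y Z
  · linear_combination ha3 X Y Y' Z + hb3 X Y Y' Z
  · linear_combination ha4 c X Y Z + hb4 c X Y Z
  · linear_combination ha5 X Y Z Z' + hb5 X Y Z Z'
  · linear_combination ha6 c X Y Z + hb6 c X Y Z

theorem IsTrilin.smul {n : ℕ} (c : ℝ) {a : V n → V n → V n → ℝ}
    (ha : IsTrilin n a) : IsTrilin n (c • a) := by
  obtain ⟨ha1, ha2, ha3, ha4, ha5, ha6⟩ := ha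
  refine ⟨fun X X' Y Z => ?_, fun d X Y Z => ?_, fun X Y Y' Z => ?_,
    fun d X Y Z => ?_, fun X Y Z Z' => ?_, fun d X Y Z => ?_⟩ <;>
      simp only [Pi.smul_apply, smul_eq_mul]
  · linear_combination c * ha1 X X' Y Z
  · linear_combination c * ha2 d X Y Z
  · linear_combination c * ha3 X Y Y' Z
  · linear_combination c * ha4 d X Y Z
  · linear_combination c * ha5 X Y Z Z'
  · linear_combination c * ha6 d X Y Z

theorem IsTrilin.zero (n : ℕ) : IsTrilin n (0 : V n → V n → V n → ℝ) := by
  refine ⟨fun X X' Y Z => by simp, fun c X Y Z => by simp, fun X Y Y' Z => by simp,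
    fun c X Y Z => by simp, fun X Y Z Z' => by simp, fun c X Y Z => by simp⟩

/-- The kernel `g₃(P₂)` of the prolonged symbol of the extended Rapcsák operator:
symmetric trilinear forms `A` on `V` with `A(X, Y, C) = 0` and
`A(X, P_h Y, J Z) = A(X, P_h Z, J Y)`. -/
def g3P2 (n : ℕ) : Submodule ℝ (V n → V n → V n → ℝ) where
  carrier := {A | IsTrilin n A ∧
    (∀ X Y Z, A X Y Z = A Y X Z) ∧ (∀ X Y Z, A X Y Z = A X Z Y) ∧
    (∀ X Y, A X Y (Cvec n) = 0) ∧
    (∀ X Y Z, A X (Ph n Y) (Jmap n Z) = A X (Ph n Z) (Jmap n Y))}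
  add_mem' := by
    rintro a b ⟨haT, ha1, ha2, ha3, ha4⟩ ⟨hbT, hb1, hb2, hb3, hb4⟩
    refine ⟨haT.add hbT, fun X Y Z => ?_, fun X Y Z => ?_, fun X Y => ?_,
      fun X Y Z => ?_⟩ <;> simp only [Pi.add_apply]
    · linear_combination ha1 X Y Z + hb1 X Y Z
    · linear_combination ha2 X Y Z + hb2 X Y Z
    · linear_combination ha3 X Y + hb3 X Y
    · linear_combination ha4 X Y Z + hb4 X Y Z
  zero_mem' := ⟨IsTrilin.zero n, fun X Y Z => by simp, fun X Y Z => by simp,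
    fun X Y => by simp, fun X Y Z => by simp⟩
  smul_mem' := by
    rintro c a ⟨haT, ha1, ha2, ha3, ha4⟩
    refine ⟨haT.smul c, fun X Y Z => ?_, fun X Y Z => ?_, fun X Y => ?_,
      fun X Y Z => ?_⟩ <;> simp only [Pi.smul_apply, smul_eq_mul]
    · linear_combination c * ha1 X Y Z
    · linear_combination c * ha2 X Y Z
    · linear_combination c * ha3 X Y
    · linear_combination c * ha4 X Y Z

namespace Sym

variable {α β : Type*}

abbrev sym3 (a b c : α) : Sym α 3 := a ::ₛ b ::ₛ c ::ₛ nil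

theorem exists_eq_sym3 (s : Sym α 3) : ∃ a b c, s = sym3 a b c := by
  obtain ⟨a, s, rfl⟩ := exists_eq_cons_of_succ s
  obtain ⟨b, s, rfl⟩ := exists_eq_cons_of_succ s
  obtain ⟨c, s, rfl⟩ := exists_eq_cons_of_succ s
  exact ⟨a, b, c, by rw [eq_nil_of_card_zero s]⟩

theorem sym3_comm₁₂ (a b c : α) : sym3 a b c = sym3 b a c := cons_swap _ _ _

theorem sym3_comm₂₃ (a b c : α) : sym3 a b c = sym3 a c b :=
  congrArg (a ::ₛ ·) (cons_swap _ _ _)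

theorem sym3_comm₁₃ (a b c : α) : sym3 a b c = sym3 c b a := by
  rw [sym3_comm₁₂, sym3_comm₂₃, sym3_comm₁₂]

theorem exists_eq_sym3_of_mem {a : α} {s : Sym α 3} (h : a ∈ s) : ∃ b c, s = sym3 b c a := by
  obtain ⟨s, rfl⟩ := exists_cons_of_mem h
  obtain ⟨b, s, rfl⟩ := exists_eq_cons_of_succ s
  obtain ⟨c, s, rfl⟩ := exists_eq_cons_of_succ s
  rw [eq_nil_of_card_zero s]
  exact ⟨b, c, (sym3_comm₁₂ a b c).trans (sym3_comm₂₃ b a c)⟩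

theorem apply_eq_of_sym3_eq {f : α → α → α → β}
    (h₁₂ : ∀ a b c, f a b c = f b a c) (h₂₃ : ∀ a b c, f a b c = f a c b)
    {a b c a' b' c' : α} (h : sym3 a b c = sym3 a' b' c') : f a b c = f a' b' c' := by
  have tail : ∀ {a b c b' c'}, b ::ₛ c ::ₛ nil = b' ::ₛ c' ::ₛ nil → f a b c = f a b' c' := by
    intro a b c b' c' h
    have hb : b ∈ b' ::ₛ c' ::ₛ nil := h ▸ mem_cons_self b _
    simp only [mem_cons, notMem_nil, or_false] at hb
    rcases hb with rfl | rfl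
    · rw [(cons_inj_left c c' nil).1 ((cons_inj_right _ _ _).1 h)]
    · rw [cons_swap b', cons_inj_right, cons_inj_left] at h
      rw [h, h₂₃]
  have ha : a ∈ sym3 a' b' c' := h ▸ mem_cons_self a _
  simp only [mem_cons, notMem_nil, or_false] at ha
  rcases ha with rfl | rfl | rfl
  · exact tail ((cons_inj_right _ _ _).1 h)
  · rw [sym3_comm₁₂ a', cons_inj_right] at h
    exact (tail h).trans (h₁₂ _ _ _)
  · rw [sym3_comm₁₃ a', cons_inj_right] at h
    exact (tail h).trans ((h₁₂ _ _ _).trans ((h₂₃ _ _ _).trans (h₁₂ _ _ _)))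

theorem card_subtype_mem [Fintype α] [DecidableEq α] (a : α) (k : ℕ) :
    Fintype.card {s : Sym α (k + 1) // a ∈ s} = Fintype.card (Sym α k) :=
  Fintype.card_congr
    { toFun := fun s => s.1.erase a s.2
      invFun := fun s => ⟨a ::ₛ s, mem_cons_self a s⟩
      left_inv := fun s => Subtype.ext (cons_erase s.2)
      right_inv := fun s => erase_cons_head s a }

end Sym

open Sym

section CrossSymmetric

variable {β γ : Type*}

/-- Basis indices are pairs `(vertical?, index)`; the shape of a triple of them is the pair of
the multisets of kinds and of indices. -/
def shape (x y z : Bool × β) : Sym Bool 3 × Sym β 3 := (sym3 x.1 y.1 z.1, sym3 x.2 y.2 z.2)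

theorem shape_surjective :
    Function.Surjective fun w : (Bool × β) × (Bool × β) × (Bool × β) => shape w.1 w.2.1 w.2.2 := by
  rintro ⟨K, S⟩
  obtain ⟨a, b, c, rfl⟩ := exists_eq_sym3 K
  obtain ⟨i, j, l, rfl⟩ := exists_eq_sym3 S
  exact ⟨((a, i), (b, j), (c, l)), rfl⟩

structure IsCrossSymm (t : Bool × β → Bool × β → Bool × β → γ) : Prop where
  swap₁₂ : ∀ x y z, t x y z = t y x z
  swap₂₃ : ∀ x y z, t x y z = t x z y
  cross : ∀ x i j, t x (false, i) (true, j) = t x (false, j) (true, i)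

namespace IsCrossSymm

variable {t : Bool × β → Bool × β → Bool × β → γ} (ht : IsCrossSymm t)
include ht

theorem rotate (x y z : Bool × β) : t x y z = t z x y := by
  rw [ht.swap₂₃, ht.swap₁₂]

theorem exchange₂₃ (x : Bool × β) (a c : Bool) (i j : β) :
    t x (a, i) (c, j) = t x (a, j) (c, i) := by
  cases a <;> cases c
  · exact ht.swap₂₃ _ _ _
  · exact ht.cross _ _ _
  · rw [ht.swap₂₃, ← ht.cross, ht.swap₂₃]
  · exact ht.swap₂₃ _ _ _

theorem exchange₁₂ (z : Bool × β) (a b : Bool) (i j : β) :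
    t (a, i) (b, j) z = t (a, j) (b, i) z := by
  rw [ht.rotate, ht.exchange₂₃, ← ht.rotate]

theorem eq_of_shape_eq {x y z x' y' z' : Bool × β} (h : shape x y z = shape x' y' z') :
    t x y z = t x' y' z' := by
  rcases x with ⟨a, i⟩; rcases y with ⟨b, j⟩; rcases z with ⟨c, l⟩
  rcases x' with ⟨a', i'⟩; rcases y' with ⟨b', j'⟩; rcases z' with ⟨c', l'⟩
  obtain ⟨hkinds, hindices⟩ := Prod.mk.inj h
  calc t (a, i) (b, j) (c, l) = t (a', i) (b', j) (c', l) :=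
        apply_eq_of_sym3_eq (f := fun a b c => t (a, i) (b, j) (c, l))
          (fun _ _ _ => by rw [ht.swap₁₂, ht.exchange₁₂])
          (fun _ _ _ => by rw [ht.swap₂₃, ht.exchange₂₃]) hkinds
    _ = t (a', i') (b', j') (c', l') :=
        apply_eq_of_sym3_eq (f := fun i j l => t (a', i) (b', j) (c', l))
          (fun _ _ _ => ht.exchange₁₂ _ _ _ _ _) (fun _ _ _ => ht.exchange₂₃ _ _ _ _ _) hindices

theorem eq_zero_of_mem_shape [Zero γ] {v : β} (hC : ∀ x y, t x y (true, v) = 0)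
    {x y z : Bool × β} (hkind : true ∈ (shape x y z).1) (hindex : v ∈ (shape x y z).2) :
    t x y z = 0 := by
  obtain ⟨a, b, hab⟩ := exists_eq_sym3_of_mem hkind
  obtain ⟨i, j, hij⟩ := exists_eq_sym3_of_mem hindex
  rw [ht.eq_of_shape_eq (x' := (a, i)) (y' := (b, j)) (z' := (true, v)) (Prod.ext hab hij)]
  exact hC _ _

end IsCrossSymm

theorem isCrossSymm_comp_shape (G : Sym Bool 3 × Sym β 3 → γ) :
    IsCrossSymm fun x y z => G (shape x y z) where
  swap₁₂ x y z := by simp only [shape, sym3_comm₁₂ x.1, sym3_comm₁₂ x.2]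
  swap₂₃ x y z := by simp only [shape, sym3_comm₂₃ x.1, sym3_comm₂₃ x.2]
  cross x i j := by simp only [shape, sym3_comm₂₃ x.2]

end CrossSymmetric

/-- `basisV n (false, i)` is `h_{i+1}` and `basisV n (true, i)` is `v_{i+1}`. -/
def basisV (n : ℕ) : Module.Basis (Bool × Fin n) ℝ (V n) :=
  ((Pi.basisFun ℝ (Fin n)).prod (Pi.basisFun ℝ (Fin n))).reindex
    (Equiv.boolProdEquivSum (Fin n)).symm

section Trilinear

variable {n : ℕ}

theorem basisV_false (i : Fin n) : basisV n (false, i) = (Pi.single i 1, 0) := by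
  ext <;> simp [basisV]

theorem basisV_true (i : Fin n) : basisV n (true, i) = (0, Pi.single i 1) := by
  ext <;> simp [basisV]

@[simp] theorem Ph_basisV_false (i : Fin n) : Ph n (basisV n (false, i)) = basisV n (false, i) := by
  simp [Ph, basisV_false]

@[simp] theorem Ph_basisV_true (i : Fin n) : Ph n (basisV n (true, i)) = 0 := by
  simp [Ph, basisV_true]

@[simp] theorem Jmap_basisV_false (i : Fin n) :
    Jmap n (basisV n (false, i)) = basisV n (true, i) := by
  simp [Jmap, basisV_false, basisV_true]

@[simp] theorem Jmap_basisV_true (i : Fin n) : Jmap n (basisV n (true, i)) = 0 := by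
  simp [Jmap, basisV_true]

theorem Cvec_eq_basisV (m : ℕ) : Cvec (m + 1) = basisV (m + 1) (true, Fin.last m) := by
  ext i <;> simp [Cvec, vvec, dlt, basisV_true, Pi.single_apply, Fin.ext_iff]

theorem isTrilin_tri (T : Tri n) : IsTrilin n fun X Y Z => T X Y Z := by
  refine ⟨?_, ?_, ?_, ?_, ?_, ?_⟩ <;> intros <;> simp

theorem exists_tri_of_isTrilin {A : V n → V n → V n → ℝ} (hA : IsTrilin n A) :
    ∃ T : Tri n, A = fun X Y Z => T X Y Z := by
  obtain ⟨h₁, h₂, h₃, h₄, h₅, h₆⟩ := hA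
  let slice (X Y : V n) : V n →ₗ[ℝ] ℝ :=
    { toFun := A X Y, map_add' := h₅ X Y, map_smul' := fun c Z => h₆ c X Y Z }
  refine ⟨LinearMap.mk₂ ℝ slice (fun X X' Y => ?_) (fun c X Y => ?_) (fun X Y Y' => ?_)
    (fun c X Y => ?_), rfl⟩ <;> refine LinearMap.ext fun Z => ?_
  exacts [h₁ X X' Y Z, h₂ c X Y Z, h₃ X Y Y' Z, h₄ c X Y Z]

theorem exists_tri_apply_basisV (t : Bool × Fin n → Bool × Fin n → Bool × Fin n → ℝ) :
    ∃ T : Tri n, ∀ x y z, T (basisV n x) (basisV n y) (basisV n z) = t x y z :=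
  ⟨(basisV n).constr ℝ fun x => (basisV n).constr ℝ fun y => (basisV n).constr ℝ (t x y),
    by simp⟩

theorem tri_ext_basisV {T T' : Tri n}
    (h : ∀ x y z,
      T (basisV n x) (basisV n y) (basisV n z) = T' (basisV n x) (basisV n y) (basisV n z)) :
    T = T' :=
  LinearMap.ext_basis (basisV n) (basisV n) fun x y => (basisV n).ext (h x y)

end Trilinear

theorem tri_mem_g3P2_iff {m : ℕ} (T : Tri (m + 1)) :
    (fun X Y Z => T X Y Z) ∈ g3P2 (m + 1) ↔
      IsCrossSymm (fun x y z => T (basisV _ x) (basisV _ y) (basisV _ z)) ∧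
        ∀ x y, T (basisV _ x) (basisV _ y) (basisV _ (true, Fin.last m)) = 0 := by
  constructor
  · rintro ⟨-, h₁₂, h₂₃, hC, hPJ⟩
    refine ⟨⟨fun x y z => h₁₂ _ _ _, fun x y z => h₂₃ _ _ _, fun x i j => ?_⟩, fun x y => ?_⟩
    · simpa using hPJ (basisV _ x) (basisV _ (false, i)) (basisV _ (false, j))
    · simpa [Cvec_eq_basisV] using hC (basisV _ x) (basisV _ y)
  · rintro ⟨ht, hC⟩
    have h₁₂ : ∀ X Y Z, T X Y Z = T Y X Z := fun X Y Z =>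
      LinearMap.congr_fun (LinearMap.congr_fun₂ (tri_ext_basisV (T' := T.flip) ht.swap₁₂) X Y) Z
    have h₂₃ : ∀ X Y Z, T X Y Z = T X Z Y := fun X Y Z =>
      LinearMap.congr_fun (LinearMap.congr_fun₂
        (tri_ext_basisV (T' := LinearMap.lflip.toLinearMap ∘ₗ T) ht.swap₂₃) X Y) Z
    have rotate : ∀ X Y Z, T X Y Z = T Z X Y := fun X Y Z => (h₂₃ _ _ _).trans (h₁₂ _ _ _)
    have hCvec : T (Cvec (m + 1)) = 0 := LinearMap.ext_basis (basisV _) (basisV _) fun x y => by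
      rw [Cvec_eq_basisV, ← rotate]
      exact hC x y
    have hPJ : T.compl₁₂ (Ph _) (Jmap _) = (T.compl₁₂ (Ph _) (Jmap _)).flip :=
      LinearMap.ext_basis (basisV _) (basisV _) fun ⟨a, i⟩ ⟨c, j⟩ => (basisV _).ext fun x => by
        cases a <;> cases c <;> simp
        exact (ht.rotate _ _ _).trans ((ht.cross _ _ _).trans (ht.rotate _ _ _).symm)
    refine ⟨isTrilin_tri T, h₁₂, h₂₃, fun X Y => ?_, fun X Y Z => ?_⟩
    · dsimp only
      rw [rotate, hCvec, LinearMap.zero_apply, LinearMap.zero_apply]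
    · dsimp only
      rw [← rotate (Ph _ Y), ← rotate (Ph _ Z)]
      exact LinearMap.congr_fun (LinearMap.congr_fun₂ hPJ Y Z) X

/-- The shapes on which `A(X, Y, C) = 0` does not force the entries of `A` to vanish. -/
abbrev FreeShape (m : ℕ) :=
  {s : Sym Bool 3 × Sym (Fin (m + 1)) 3 // ¬(true ∈ s.1 ∧ Fin.last m ∈ s.2)}

def g3P2Coords (m : ℕ) : g3P2 (m + 1) →ₗ[ℝ] (FreeShape m → ℝ) where
  toFun A s :=
    let w := Function.surjInv shape_surjective s.1
    (A : V (m + 1) → V (m + 1) → V (m + 1) → ℝ) (basisV _ w.1) (basisV _ w.2.1) (basisV _ w.2.2)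
  map_add' _ _ := rfl
  map_smul' _ _ := rfl

theorem g3P2Coords_injective (m : ℕ) : Function.Injective (g3P2Coords m) := by
  refine (injective_iff_map_eq_zero _).2 fun ⟨A, hA⟩ h0 => ?_
  obtain ⟨T, rfl⟩ := exists_tri_of_isTrilin hA.1
  obtain ⟨ht, hC⟩ := (tri_mem_g3P2_iff T).1 hA
  suffices T = 0 by subst this; rfl
  refine tri_ext_basisV fun x y z => ?_
  by_cases hs : true ∈ (shape x y z).1 ∧ Fin.last m ∈ (shape x y z).2
  · exact ht.eq_zero_of_mem_shape hC hs.1 hs.2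
  · rw [ht.eq_of_shape_eq (Function.surjInv_eq shape_surjective (shape x y z)).symm]
    exact congr_fun h0 ⟨_, hs⟩

theorem g3P2Coords_surjective (m : ℕ) : Function.Surjective (g3P2Coords m) := by
  intro g
  let G (s : Sym Bool 3 × Sym (Fin (m + 1)) 3) : ℝ :=
    if hs : true ∈ s.1 ∧ Fin.last m ∈ s.2 then 0 else g ⟨s, hs⟩
  obtain ⟨T, hT⟩ := exists_tri_apply_basisV fun x y z => G (shape x y z)
  have hA : (fun X Y Z => T X Y Z) ∈ g3P2 (m + 1) := by
    refine (tri_mem_g3P2_iff T).2 ⟨?_, fun x y => ?_⟩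
    · simpa only [hT] using isCrossSymm_comp_shape G
    · simp [hT, G, shape]
  refine ⟨⟨_, hA⟩, funext fun s => ?_⟩
  simp only [g3P2Coords, LinearMap.coe_mk, AddHom.coe_mk, hT, Function.surjInv_eq shape_surjective]
  exact dif_neg s.2

theorem finrank_g3P2_succ (m : ℕ) :
    Module.finrank ℝ (g3P2 (m + 1)) = Fintype.card (FreeShape m) := by
  rw [(LinearEquiv.ofBijective (g3P2Coords m)
    ⟨g3P2Coords_injective m, g3P2Coords_surjective m⟩).finrank_eq,
    Module.finrank_fintype_fun_eq_card]

theorem card_freeShape_add (m : ℕ) :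
    Fintype.card (FreeShape m) + 3 * (m + 2).choose 2 = 4 * (m + 3).choose 3 := by
  have hkilled :
      Fintype.card {s : Sym Bool 3 × Sym (Fin (m + 1)) 3 // true ∈ s.1 ∧ Fin.last m ∈ s.2}
        = 3 * (m + 2).choose 2 := by
    rw [Fintype.card_congr (Equiv.subtypeProdEquivProd (p := (true ∈ ·)) (q := (Fin.last m ∈ ·))),
      Fintype.card_prod, card_subtype_mem, card_subtype_mem, card_sym_eq_choose,
      card_sym_eq_choose]
    simp
  have hall : Fintype.card (Sym Bool 3 × Sym (Fin (m + 1)) 3) = 4 * (m + 3).choose 3 := by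
    rw [Fintype.card_prod, card_sym_eq_choose, card_sym_eq_choose]
    simp
  rw [← hkilled, ← hall, Fintype.card_subtype_compl,
    Nat.sub_add_cancel (Fintype.card_subtype_le _)]

/-- the kernel `g₃(P₂)` of the prolonged symbol of the extended
Rapcsák operator has dimension `(4n³ + 3n² − n)/6`. -/
theorem dim_g3P2 (n : ℕ) (hn : 1 ≤ n) :
    Module.finrank ℝ (g3P2 n) = (4 * n ^ 3 + 3 * n ^ 2 - n) / 6 := by
  obtain ⟨m, rfl⟩ : ∃ m, n = m + 1 := ⟨n - 1, by omega⟩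
  have hcard := card_freeShape_add m
  have h₂ := Nat.add_one_mul_choose_eq (m + 1) 1
  have h₃ := Nat.add_one_mul_choose_eq (m + 2) 2
  rw [Nat.choose_one_right] at h₂
  have key : 4 * (m + 1) ^ 3 + 3 * (m + 1) ^ 2 = 6 * Module.finrank ℝ (g3P2 (m + 1)) + (m + 1) := by
    rw [finrank_g3P2_succ]
    linear_combination (4 * m + 3) * h₂ + 8 * h₃ - 6 * hcard
  rw [key, Nat.add_sub_cancel, Nat.mul_div_cancel_left _ (by norm_num)]
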